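/- Let X, Y, ε be random variables taking values in finite nonempty types on a common probability space, with ε independent of the pair (X, Y), and let Z := f(X, ε) for a function f. If there exists a function g such that g(Z) = X almost surely, then I(Z; Y) = I(X; Y). -/
import Mathlib


open Classical Finset Real

/-- `μ` is a probability mass function on the finite type `Ω`. -/
def IsPMF {Ω : Type*} [Fintype Ω] (μ : Ω → ℝ) : Prop :=
  (∀ ω, 0 ≤ μ ω) ∧ ∑ ω, μ ω = 1

open Classical in
/-- Probability that the random variable `X` takes the value `a`, under `μ`. -/
noncomputable def pr {Ω α : Type*} [Fintype Ω] (μ : Ω → ℝ) (X : Ω → α) (a : α) : ℝ :=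
  ∑ ω, if X ω = a then μ ω else 0

/-- Shannon entropy `H(X)` (natural logarithm). -/
noncomputable def ent {Ω α : Type*} [Fintype Ω] [Fintype α] (μ : Ω → ℝ) (X : Ω → α) : ℝ :=
  -∑ a, pr μ X a * Real.log (pr μ X a)

/-- Conditional entropy `H(X | Y) := H(X, Y) - H(Y)`. -/
noncomputable def condEnt {Ω α β : Type*} [Fintype Ω] [Fintype α] [Fintype β]
    (μ : Ω → ℝ) (X : Ω → α) (Y : Ω → β) : ℝ :=
  ent μ (fun ω => (X ω, Y ω)) - ent μ Y

/-- Mutual information `I(X; Y) := H(X) + H(Y) - H(X, Y)`. -/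
noncomputable def mi {Ω α β : Type*} [Fintype Ω] [Fintype α] [Fintype β]
    (μ : Ω → ℝ) (X : Ω → α) (Y : Ω → β) : ℝ :=
  ent μ X + ent μ Y - ent μ (fun ω => (X ω, Y ω))

/-- Conditional mutual information
`I(X; Y | Z) := H(X, Z) + H(Y, Z) - H(X, Y, Z) - H(Z)`. -/
noncomputable def condMI {Ω α β γ : Type*} [Fintype Ω] [Fintype α] [Fintype β] [Fintype γ]
    (μ : Ω → ℝ) (X : Ω → α) (Y : Ω → β) (Z : Ω → γ) : ℝ :=
  ent μ (fun ω => (X ω, Z ω)) + ent μ (fun ω => (Y ω, Z ω))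
    - ent μ (fun ω => ((X ω, Y ω), Z ω)) - ent μ Z

/-- Independence of the random variables `X` and `Y` under `μ`. -/
def IndepRV {Ω α β : Type*} [Fintype Ω] (μ : Ω → ℝ) (X : Ω → α) (Y : Ω → β) : Prop :=
  ∀ a b, pr μ (fun ω => (X ω, Y ω)) (a, b) = pr μ X a * pr μ Y b

/-- Kullback–Leibler divergence between pmfs on a finite type (natural logarithm). -/
noncomputable def KL {α : Type*} [Fintype α] (p q : α → ℝ) : ℝ :=
  ∑ x, p x * Real.log (p x / q x)

/-- Jensen–Shannon divergence between pmfs on a finite type. -/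
noncomputable def JSD {α : Type*} [Fintype α] (p q : α → ℝ) : ℝ :=
  (1 / 2) * KL p (fun x => (p x + q x) / 2) + (1 / 2) * KL q (fun x => (p x + q x) / 2)

lemma pr_nonneg' {Ω α : Type*} [Fintype Ω] (μ : Ω → ℝ) (h : ∀ ω, 0 ≤ μ ω) (W : Ω → α) (a : α) :
    0 ≤ pr μ W a := by
  unfold pr
  apply Finset.sum_nonneg
  intro ω _
  split <;> simp [h ω]

lemma pr_congr_ae {Ω α : Type*} [Fintype Ω] (μ : Ω → ℝ) (hμ0 : ∀ ω, 0 ≤ μ ω)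
    (W W' : Ω → α) (h : ∀ ω, 0 < μ ω → W ω = W' ω) : pr μ W = pr μ W' := by
  funext a; unfold pr; apply Finset.sum_congr rfl; intro ω _
  rcases (hμ0 ω).lt_or_eq with hpos | h0
  · rw [h ω hpos]
  · simp [← h0]

lemma pr_fst {Ω α β : Type*} [Fintype Ω] [Fintype β] (μ : Ω → ℝ) (W : Ω → α) (V : Ω → β) (a : α) :
    pr μ W a = ∑ b, pr μ (fun ω => (W ω, V ω)) (a, b) := by
  unfold pr
  rw [Finset.sum_comm]
  apply Finset.sum_congr rfl; intro ω _
  simp [Prod.ext_iff, ite_and]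

lemma pr_mid {Ω α β γ : Type*} [Fintype Ω] [Fintype β] (μ : Ω → ℝ)
    (A : Ω → α) (B : Ω → β) (C : Ω → γ) (a : α) (c : γ) :
    pr μ (fun ω => (A ω, C ω)) (a, c) = ∑ b, pr μ (fun ω => (A ω, (B ω, C ω))) (a, (b, c)) := by
  unfold pr
  rw [Finset.sum_comm]
  apply Finset.sum_congr rfl; intro ω _
  simp [Prod.ext_iff, ite_and]

lemma pr_triple {Ω Xv Yv Ev Zv : Type*}
    [Fintype Ω] [Fintype Ev]
    (μ : Ω → ℝ)
    (X : Ω → Xv) (Y : Ω → Yv) (ε : Ω → Ev)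
    (hInd : IndepRV μ ε (fun ω => (X ω, Y ω)))
    (f : Xv → Ev → Zv) (Z : Ω → Zv) (hZ : ∀ ω, Z ω = f (X ω) (ε ω))
    (z : Zv) (x : Xv) (y : Yv) :
    pr μ (fun ω => (Z ω, (X ω, Y ω))) (z, (x, y))
      = (∑ e, if f x e = z then pr μ ε e else 0) * pr μ (fun ω => (X ω, Y ω)) (x, y) := by
  classical
  rw [Finset.sum_mul]
  have h1 : ∀ e : Ev, (if f x e = z then pr μ ε e else 0) * pr μ (fun ω => (X ω, Y ω)) (x, y)
      = ∑ ω, if f x e = z ∧ (ε ω, (X ω, Y ω)) = (e, (x, y)) then μ ω else 0 := by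
    intro e
    rw [ite_mul, zero_mul, ← hInd e (x, y)]
    unfold pr
    split_ifs with hc <;> simp [hc]
  rw [Finset.sum_congr rfl fun e _ => h1 e, Finset.sum_comm]
  unfold pr
  apply Finset.sum_congr rfl; intro ω _
  have h2 : ∀ e, (if f x e = z ∧ (ε ω, X ω, Y ω) = (e, x, y) then μ ω else 0)
      = if e = ε ω then (if f x e = z ∧ X ω = x ∧ Y ω = y then μ ω else 0) else 0 := by
    intro e; by_cases he : e = ε ω <;> simp [he, eq_comm, Prod.ext_iff, and_assoc]
  rw [Finset.sum_congr rfl fun e _ => h2 e, Finset.sum_ite_eq' univ (ε ω)]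
  by_cases hx : X ω = x
  · simp [hZ, hx, Prod.ext_iff, and_assoc]
  · simp [hx, Prod.ext_iff]

/-- Information preservation of almost-surely invertible stochastic encodings:
if `ε` is independent of `(X, Y)`, `Z := f(X, ε)`, and `g(Z) = X` almost surely
for some `g`, then `I(Z; Y) = I(X; Y)`. -/
theorem mi_eq_of_as_invertible_encoding {Ω Xv Yv Ev Zv : Type*}
    [Fintype Ω] [Nonempty Ω] [Fintype Xv] [Nonempty Xv] [Fintype Yv] [Nonempty Yv]
    [Fintype Ev] [Nonempty Ev] [Fintype Zv] [Nonempty Zv]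
    (μ : Ω → ℝ) (hμ : IsPMF μ)
    (X : Ω → Xv) (Y : Ω → Yv) (ε : Ω → Ev)
    (hInd : IndepRV μ ε (fun ω => (X ω, Y ω)))
    (f : Xv → Ev → Zv) (Z : Ω → Zv) (hZ : ∀ ω, Z ω = f (X ω) (ε ω))
    (hg : ∃ g : Zv → Xv, ∀ ω, 0 < μ ω → g (Z ω) = X ω) :
    mi μ Z Y = mi μ X Y := by
  classical
  obtain ⟨g, hgZ⟩ := hg
  obtain ⟨hμ0, -⟩ := hμ
  -- the triple distribution vanishes off the graph of g
  have hzero : ∀ z x y, x ≠ g z → pr μ (fun ω => (Z ω, (X ω, Y ω))) (z, (x, y)) = 0 := by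
    intro z x y hx
    unfold pr
    apply Finset.sum_eq_zero
    intro ω _
    split_ifs with hc
    · simp only [Prod.ext_iff] at hc
      obtain ⟨hcz, hcx, hcy⟩ := hc
      rcases (hμ0 ω).lt_or_eq with hpos | h0
      · exact absurd (by rw [← hcx, ← hcz, hgZ ω hpos]) hx
      · exact h0.symm
    · rfl
  -- r(z,y) = k(z) * q(g z, y)
  have hr : ∀ z y, pr μ (fun ω => (Z ω, Y ω)) (z, y)
      = (∑ e, if f (g z) e = z then pr μ ε e else 0) * pr μ (fun ω => (X ω, Y ω)) (g z, y) := by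
    intro z y
    rw [pr_mid μ Z X Y z y]
    rw [Finset.sum_eq_single (g z) (fun x _ hx => hzero z x y hx)
      (fun h => absurd (Finset.mem_univ _) h)]
    exact pr_triple μ X Y ε hInd f Z hZ z (g z) y
  -- pZ(z) = k(z) * pX(g z)
  have hpZ : ∀ z, pr μ Z z = (∑ e, if f (g z) e = z then pr μ ε e else 0) * pr μ X (g z) := by
    intro z
    rw [pr_fst μ Z Y z, pr_fst μ X Y (g z), Finset.mul_sum]
    exact Finset.sum_congr rfl fun y _ => hr z y
  -- grouping: summing r over the fiber of g recovers q
  have hXgZ : pr μ (fun ω => (g (Z ω), Y ω)) = pr μ (fun ω => (X ω, Y ω)) :=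
    pr_congr_ae μ hμ0 _ _ (fun ω hω => by rw [hgZ ω hω])
  have hgroup : ∀ x y, (∑ z, if g z = x then pr μ (fun ω => (Z ω, Y ω)) (z, y) else 0)
      = pr μ (fun ω => (X ω, Y ω)) (x, y) := by
    intro x y
    rw [← hXgZ]
    have h1 : ∀ z, (if g z = x then pr μ (fun ω => (Z ω, Y ω)) (z, y) else 0)
        = ∑ ω, if (Z ω, Y ω) = (z, y) ∧ g z = x then μ ω else 0 := by
      intro z; unfold pr; split_ifs with hc <;> simp [hc]
    rw [Finset.sum_congr rfl fun z _ => h1 z, Finset.sum_comm]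
    unfold pr
    apply Finset.sum_congr rfl; intro ω _
    have h2 : ∀ z, (if (Z ω, Y ω) = (z, y) ∧ g z = x then μ ω else 0)
        = if z = Z ω then (if g z = x ∧ Y ω = y then μ ω else 0) else 0 := by
      intro z; by_cases hz : z = Z ω <;> simp [hz, eq_comm, Prod.ext_iff, and_comm]
    rw [Finset.sum_congr rfl fun z _ => h2 z, Finset.sum_ite_eq' univ (Z ω)]
    simp [Prod.ext_iff]
  -- per-term log identity
  have hterm : ∀ z y,
      pr μ (fun ω => (Z ω, Y ω)) (z, y) *
        (Real.log (pr μ (fun ω => (Z ω, Y ω)) (z, y)) - Real.log (pr μ Z z))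
      = pr μ (fun ω => (Z ω, Y ω)) (z, y) *
        (Real.log (pr μ (fun ω => (X ω, Y ω)) (g z, y)) - Real.log (pr μ X (g z))) := by
    intro z y
    rcases (pr_nonneg' μ hμ0 (fun ω => (Z ω, Y ω)) (z, y)).lt_or_eq with hpos | h0
    · have hk0 : 0 ≤ (∑ e, if f (g z) e = z then pr μ ε e else 0) :=
        Finset.sum_nonneg fun e _ => by
          by_cases h : f (g z) e = z <;> simp [h, pr_nonneg' μ hμ0 ε e]
      have hprod : 0 < (∑ e, if f (g z) e = z then pr μ ε e else 0) *
          pr μ (fun ω => (X ω, Y ω)) (g z, y) := by rw [← hr z y]; exact hpos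
      rcases mul_pos_iff.mp hprod with ⟨hkpos, hqpos⟩ | ⟨hneg, -⟩
      swap
      · exact absurd hk0 (not_le.mpr hneg)
      have hpXpos : 0 < pr μ X (g z) := by
        rw [pr_fst μ X Y (g z)]
        exact lt_of_lt_of_le hqpos
          (Finset.single_le_sum (fun y' _ => pr_nonneg' μ hμ0 _ _) (Finset.mem_univ y))
      rw [hr z y, hpZ z, Real.log_mul hkpos.ne' hqpos.ne', Real.log_mul hkpos.ne' hpXpos.ne']
      ring
    · rw [← h0]; ring
  -- the common quantity T
  set T : ℝ := ∑ x, ∑ y, pr μ (fun ω => (X ω, Y ω)) (x, y) *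
      (Real.log (pr μ (fun ω => (X ω, Y ω)) (x, y)) - Real.log (pr μ X x)) with hT
  have key : (∑ z, ∑ y, pr μ (fun ω => (Z ω, Y ω)) (z, y) *
      (Real.log (pr μ (fun ω => (Z ω, Y ω)) (z, y)) - Real.log (pr μ Z z))) = T := by
    rw [Finset.sum_congr rfl fun z _ => Finset.sum_congr rfl fun y _ => hterm z y]
    rw [Finset.sum_comm]
    have h3 : ∀ y z, pr μ (fun ω => (Z ω, Y ω)) (z, y) *
          (Real.log (pr μ (fun ω => (X ω, Y ω)) (g z, y)) - Real.log (pr μ X (g z)))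
        = ∑ x, (if g z = x then pr μ (fun ω => (Z ω, Y ω)) (z, y) else 0) *
          (Real.log (pr μ (fun ω => (X ω, Y ω)) (x, y)) - Real.log (pr μ X x)) := by
      intro y z
      simp only [ite_mul, zero_mul, Finset.sum_ite_eq, Finset.mem_univ, if_true]
    rw [Finset.sum_congr rfl fun y _ => Finset.sum_congr rfl fun z _ => h3 y z]
    rw [Finset.sum_congr rfl fun y _ => Finset.sum_comm]
    rw [hT]
    conv_rhs => rw [Finset.sum_comm]
    apply Finset.sum_congr rfl; intro y _
    apply Finset.sum_congr rfl; intro x _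
    rw [← Finset.sum_mul, hgroup x y]
  -- expand the conditional entropies
  have expandZ : (∑ z, ∑ y, pr μ (fun ω => (Z ω, Y ω)) (z, y) *
      (Real.log (pr μ (fun ω => (Z ω, Y ω)) (z, y)) - Real.log (pr μ Z z)))
      = (∑ z, ∑ y, pr μ (fun ω => (Z ω, Y ω)) (z, y) * Real.log (pr μ (fun ω => (Z ω, Y ω)) (z, y)))
        - ∑ z, pr μ Z z * Real.log (pr μ Z z) := by
    rw [← Finset.sum_sub_distrib]
    apply Finset.sum_congr rfl; intro z _
    rw [pr_fst μ Z Y z, Finset.sum_mul, ← Finset.sum_sub_distrib]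
    apply Finset.sum_congr rfl; intro y _
    ring
  have expandX : (∑ x, ∑ y, pr μ (fun ω => (X ω, Y ω)) (x, y) *
      (Real.log (pr μ (fun ω => (X ω, Y ω)) (x, y)) - Real.log (pr μ X x)))
      = (∑ x, ∑ y, pr μ (fun ω => (X ω, Y ω)) (x, y) * Real.log (pr μ (fun ω => (X ω, Y ω)) (x, y)))
        - ∑ x, pr μ X x * Real.log (pr μ X x) := by
    rw [← Finset.sum_sub_distrib]
    apply Finset.sum_congr rfl; intro x _
    rw [pr_fst μ X Y x, Finset.sum_mul, ← Finset.sum_sub_distrib]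
    apply Finset.sum_congr rfl; intro y _
    ring
  have hentZY : ent μ (fun ω => (Z ω, Y ω))
      = -∑ z, ∑ y, pr μ (fun ω => (Z ω, Y ω)) (z, y) *
        Real.log (pr μ (fun ω => (Z ω, Y ω)) (z, y)) := by
    unfold ent; rw [Fintype.sum_prod_type]
  have hentXY : ent μ (fun ω => (X ω, Y ω))
      = -∑ x, ∑ y, pr μ (fun ω => (X ω, Y ω)) (x, y) *
        Real.log (pr μ (fun ω => (X ω, Y ω)) (x, y)) := by
    unfold ent; rw [Fintype.sum_prod_type]
  have hentZ : ent μ Z = -∑ z, pr μ Z z * Real.log (pr μ Z z) := rfl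
  have hentX : ent μ X = -∑ x, pr μ X x * Real.log (pr μ X x) := rfl
  have hXside : (∑ x, ∑ y, pr μ (fun ω => (X ω, Y ω)) (x, y) *
      (Real.log (pr μ (fun ω => (X ω, Y ω)) (x, y)) - Real.log (pr μ X x))) = T := by rw [hT]
  unfold mi
  rw [hentZY, hentXY, hentZ, hentX]
  rw [expandZ] at key
  rw [expandX] at hXside
  linarith
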